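/- With y₁^± = (∓i·t^{±1}) ⊗ s₁, y₂^± = (i·t^{±1}) ⊗ s₂, y₃^± = i ⊗ s₃ in the loop algebra sl(2,ℂ)[t,t⁻¹], one has [yᵢ^+, yᵢ^-] = 0 for all i ∈ {1,2,3}, and [y₁^±, [y₁^±, y₃^±]] - [y₂^±, [y₂^±, y₃^±]] = 0, [y₃^±, [y₃^±, y₂^±]] = -y₂^±, [y₃^±, [y₃^±, y₁^±]] = -y₁^±. -/

import Mathlib

/-! Since `⁅p ⊗ x, q ⊗ y⁆ = pq ⊗ ⁅x, y⁆`, each relation reduces to a double bracket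
`⁅sⱼ, ⁅sⱼ, sₖ⁆⁆` in `sl(2)` together with an identity between the monomials `c tᵏ`.
Two consecutive cyclic relations `⁅sₖ, sⱼ⁆ = i sₗ`, `⁅sⱼ, sₗ⁆ = i sₖ` give
`⁅sⱼ, ⁅sⱼ, sₖ⁆⁆ = -i² sₖ = sₖ`, and likewise `⁅sⱼ, ⁅sⱼ, sₗ⁆⁆ = sₗ`. -/

open TensorProduct Complex

/-- An element `c·t^k ⊗ s` of the loop algebra `ℂ[t,t⁻¹] ⊗ sl(2,ℂ)`. -/
noncomputable def loopElt {L : Type*} [LieRing L] [LieAlgebra ℂ L]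
    (c : ℂ) (k : ℤ) (s : L) : LaurentPolynomial ℂ ⊗[ℂ] L :=
  (c • LaurentPolynomial.T k) ⊗ₜ[ℂ] s

section SquareRootOfMinusOne

variable {R L : Type*} [CommRing R] [LieRing L] [LieAlgebra R L] {c : R} {x y z : L}

theorem lie_lie_left_of_lie_eq_smul (hxy : ⁅x, y⁆ = c • z) (hyz : ⁅y, z⁆ = c • x)
    (hc : c * c = -1) : ⁅y, ⁅y, x⁆⁆ = x := by
  rw [← lie_skew y x, hxy, lie_neg, lie_smul, hyz, smul_smul, hc, neg_smul, one_smul, neg_neg]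

theorem lie_lie_right_of_lie_eq_smul (hxy : ⁅x, y⁆ = c • z) (hyz : ⁅y, z⁆ = c • x)
    (hc : c * c = -1) : ⁅y, ⁅y, z⁆⁆ = z := by
  rw [hyz, lie_smul, ← lie_skew y x, hxy, smul_neg, smul_smul, hc, neg_smul, one_smul, neg_neg]

end SquareRootOfMinusOne

section LoopAlgebra

variable {L : Type*} [LieRing L] [LieAlgebra ℂ L]

theorem loopElt_lie (c d : ℂ) (k l : ℤ) (x y : L) :
    ⁅loopElt c k x, loopElt d l y⁆ = loopElt (c * d) (k + l) ⁅x, y⁆ := by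
  simp only [loopElt, LieAlgebra.ExtendScalars.bracket_tmul]
  rw [smul_mul_smul_comm, ← LaurentPolynomial.T_add, add_comm]

theorem loopElt_zero (c : ℂ) (k : ℤ) : loopElt c k (0 : L) = 0 :=
  TensorProduct.tmul_zero _ _

theorem loopElt_neg (c : ℂ) (k : ℤ) (x : L) : loopElt (-c) k x = -loopElt c k x := by
  rw [loopElt, neg_smul, TensorProduct.neg_tmul, loopElt]

end LoopAlgebra

/-- Relations (31)-(32) of the trigonometric limit in the loop algebra:
`⁅yᵢ⁺, yᵢ⁻⁆ = 0`, `⁅y₁^±,⁅y₁^±,y₃^±⁆⁆ − ⁅y₂^±,⁅y₂^±,y₃^±⁆⁆ = 0`,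
`⁅y₃^±,⁅y₃^±,y₂^±⁆⁆ = −y₂^±`, `⁅y₃^±,⁅y₃^±,y₁^±⁆⁆ = −y₁^±`. -/
theorem stmt13 {L : Type*} [LieRing L] [LieAlgebra ℂ L] (s₁ s₂ s₃ : L)
    (h12 : ⁅s₁, s₂⁆ = I • s₃) (h23 : ⁅s₂, s₃⁆ = I • s₁)
    (h31 : ⁅s₃, s₁⁆ = I • s₂) :
    letI y1p := loopElt (-I) 1 s₁
    letI y1m := loopElt I (-1) s₁
    letI y2p := loopElt I 1 s₂
    letI y2m := loopElt I (-1) s₂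
    letI y3 := loopElt I 0 s₃
    (⁅y1p, y1m⁆ = 0) ∧ (⁅y2p, y2m⁆ = 0) ∧ (⁅y3, y3⁆ = 0) ∧
    (⁅y1p, ⁅y1p, y3⁆⁆ - ⁅y2p, ⁅y2p, y3⁆⁆ = 0) ∧
    (⁅y1m, ⁅y1m, y3⁆⁆ - ⁅y2m, ⁅y2m, y3⁆⁆ = 0) ∧
    (⁅y3, ⁅y3, y2p⁆⁆ = -y2p) ∧ (⁅y3, ⁅y3, y2m⁆⁆ = -y2m) ∧
    (⁅y3, ⁅y3, y1p⁆⁆ = -y1p) ∧ (⁅y3, ⁅y3, y1m⁆⁆ = -y1m) := by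
  have h113 : ⁅s₁, ⁅s₁, s₃⁆⁆ = s₃ := lie_lie_left_of_lie_eq_smul h31 h12 I_mul_I
  have h223 : ⁅s₂, ⁅s₂, s₃⁆⁆ = s₃ := lie_lie_right_of_lie_eq_smul h12 h23 I_mul_I
  have h331 : ⁅s₃, ⁅s₃, s₁⁆⁆ = s₁ := lie_lie_right_of_lie_eq_smul h23 h31 I_mul_I
  have h332 : ⁅s₃, ⁅s₃, s₂⁆⁆ = s₂ := lie_lie_left_of_lie_eq_smul h23 h31 I_mul_I
  have hI_cube : I * (I * I) = -I := by rw [I_mul_I, mul_neg_one]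
  simp only [loopElt_lie, lie_self, loopElt_zero, h113, h223, h331, h332, ← loopElt_neg,
    neg_mul, mul_neg, neg_neg, hI_cube, add_zero, zero_add, sub_self, and_self]
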